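/- The Grassmannian bracket algebra G(S) on a set S of |S| = m ≥ 3 symbols, generated by brackets [s,t] subject to antisymmetry and the Plücker relations, embeds into the Laurent ring k[E_T, D_T^{−1}] determined by any triangulation T of the convex m-gon with vertices S: every bracket [s,t] is a Laurent polynomial in the 2m−3 brackets corresponding to edges and diagonals of T, with denominator a monomial in the m−3 diagonal brackets. -/

import Mathlib

/-!
Induct on the number of diagonals of `T` that the chord `[s,t]` crosses. If it crosses none,
it is an edge or a diagonal of `T`, because a triangulation is a maximal family of
non-crossing diagonals (a convex `m`-gon carries at most `m - 3` of them). Otherwise pick a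
crossing diagonal `[p,q]`; the Plücker relation `[s,t][p,q] = [s,p][t,q] - [s,q][t,p]`
expresses `[s,t][p,q]` through the four sides of the quadrilateral `s p t q`, and each side
crosses strictly fewer diagonals of `T`, since a chord crossing a side of a quadrilateral
crosses one of its two diagonals. Dividing by `[p,q]` costs one more power of a diagonal.
-/

open Finset MvPolynomial

/-- The bracket `[s,t]` of two vertices, as a 2×2 minor in the polynomial ring
`k[x_{s,0}, x_{s,1} : s ∈ S]`.  The Grassmannian (Plücker) algebra `G(S) ≅ k[G(2,m)]` is
the subalgebra generated by these brackets. -/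
noncomputable def br {k : Type*} [CommRing k] {m : ℕ} (s t : Fin m) :
    MvPolynomial (Fin m × Fin 2) k :=
  X (s, 0) * X (t, 1) - X (t, 0) * X (s, 1)

/-- A chord of a convex polygon is a pair `(i, j)`, `i < j`, of vertices listed in cyclic
order; two chords cross in their interiors iff their endpoints interleave. -/
def Crosses {α : Type*} [LinearOrder α] (p q : α × α) : Prop :=
  (p.1 < q.1 ∧ q.1 < p.2 ∧ p.2 < q.2) ∨ (q.1 < p.1 ∧ p.1 < q.2 ∧ q.2 < p.2)

instance {α : Type*} [LinearOrder α] (p q : α × α) : Decidable (Crosses p q) := by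
  unfold Crosses; infer_instance

section Crosses

variable {α : Type*} [LinearOrder α]

theorem Crosses.symm {p q : α × α} (h : Crosses p q) : Crosses q p :=
  Or.symm h

theorem StrictMono.crosses_map_iff {β : Type*} [LinearOrder β] {f : α → β} (hf : StrictMono f)
    {p q : α × α} : Crosses (Prod.map f f p) (Prod.map f f q) ↔ Crosses p q := by
  simp only [Crosses, Prod.map_fst, Prod.map_snd, hf.lt_iff_lt]

/-- A chord joining an endpoint of `c` to an endpoint of `d` is a side of the quadrilateral
spanned by the crossing chords `c` and `d`. -/
theorem Crosses.quadrilateral_side {c d : α × α} (h : Crosses c d) {a b : α}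
    (ha : a = c.1 ∨ a = c.2) (hb : b = d.1 ∨ b = d.2) :
    min a b < max a b ∧ ¬Crosses (min a b, max a b) d ∧
      ∀ e, Crosses (min a b, max a b) e → Crosses c e ∨ Crosses d e := by
  unfold Crosses at *
  rcases le_total a b with hab | hab
  · rw [min_eq_left hab, max_eq_right hab]
    rcases ha with rfl | rfl <;> rcases hb with rfl | rfl <;> grind
  · rw [min_eq_right hab, max_eq_left hab]
    rcases ha with rfl | rfl <;> rcases hb with rfl | rfl <;> grind

theorem card_filter_crosses_lt {D : Finset (α × α)} (hnc : ∀ p ∈ D, ∀ q ∈ D, ¬Crosses p q)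
    {c d u : α × α} (hd : d ∈ D) (hcd : Crosses c d) (hud : ¬Crosses u d)
    (hu : ∀ e, Crosses u e → Crosses c e ∨ Crosses d e) :
    #{e ∈ D | Crosses u e} < #{e ∈ D | Crosses c e} := by
  refine card_lt_card ((ssubset_iff_of_subset fun e he => ?_).2 ⟨d, ?_, ?_⟩)
  · rw [mem_filter] at he ⊢
    exact ⟨he.1, (hu e he.2).resolve_right (hnc d hd e he.1)⟩
  · exact mem_filter.2 ⟨hd, hcd⟩
  · simp [hud]

end Crosses

theorem exists_split_of_pairwise_not_crosses {a b : ℕ} {F : Finset (ℕ × ℕ)}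
    (hF : ∀ r ∈ F, a ≤ r.1 ∧ r.1 < r.2 ∧ r.2 ≤ b) (hab : (a, b) ∉ F)
    (hnc : ∀ r ∈ F, ∀ r' ∈ F, ¬Crosses r r') (hne : F.Nonempty) :
    ∃ c, a < c ∧ c < b ∧ ∀ r ∈ F, r.2 ≤ c ∨ c ≤ r.1 := by
  obtain ⟨⟨p, q⟩, hpq, hlongest⟩ := F.exists_max_image (fun r => r.2 - r.1) hne
  have hpqF := hF _ hpq
  have hsplit : ∀ r ∈ F, ¬(r.1 < p ∧ p < r.2) ∧ ¬(r.1 < q ∧ q < r.2) := fun r hr => by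
    have := hlongest r hr
    have := hnc r hr _ hpq
    have := hF r hr
    unfold Crosses at *
    omega
  by_cases hp : a < p
  · exact ⟨p, hp, by omega, fun r hr => by have := hsplit r hr; omega⟩
  · have hq : q ≠ b := fun hq => hab (by rwa [← hq, show a = p by omega])
    exact ⟨q, by omega, by omega, fun r hr => by have := hsplit r hr; omega⟩

theorem card_le_of_pairwise_not_crosses {a b : ℕ} {F : Finset (ℕ × ℕ)}
    (hF : ∀ r ∈ F, a ≤ r.1 ∧ r.1 + 2 ≤ r.2 ∧ r.2 ≤ b)
    (hnc : ∀ r ∈ F, ∀ r' ∈ F, ¬Crosses r r') : #F ≤ b - a - 1 := by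
  induction hn : b - a using Nat.strong_induction_on generalizing a b F with
  | _ n ih =>
  subst hn
  have herase : #F - 1 ≤ #(F.erase (a, b)) := F.pred_card_le_card_erase
  rcases (F.erase (a, b)).eq_empty_or_nonempty with hempty | hne
  · rcases F.eq_empty_or_nonempty with rfl | ⟨r, hr⟩
    · simp
    · have := hF r hr
      rw [hempty, card_empty] at herase
      omega
  set G := F.erase (a, b)
  have hG : ∀ r ∈ G, r ∈ F := fun r hr => mem_of_mem_erase hr
  obtain ⟨c, hac, hcb, hc⟩ := exists_split_of_pairwise_not_crosses
    (fun r hr => by have := hF r (hG r hr); omega) (notMem_erase _ _)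
    (fun r hr r' hr' => hnc r (hG r hr) r' (hG r' hr')) hne
  have hleft := ih (c - a) (by omega) (F := {r ∈ G | r.2 ≤ c})
    (fun r hr => by rw [mem_filter] at hr; have := hF r (hG r hr.1); omega)
    (fun r hr r' hr' => hnc r (hG r (mem_filter.1 hr).1) r' (hG r' (mem_filter.1 hr').1)) rfl
  have hright := ih (b - c) (by omega) (F := {r ∈ G | c ≤ r.1})
    (fun r hr => by rw [mem_filter] at hr; have := hF r (hG r hr.1); omega)
    (fun r hr r' hr' => hnc r (hG r (mem_filter.1 hr).1) r' (hG r' (mem_filter.1 hr').1)) rfl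
  have hunion : #G ≤ #{r ∈ G | r.2 ≤ c} + #{r ∈ G | c ≤ r.1} :=
    calc #G = #{r ∈ G | r.2 ≤ c ∨ c ≤ r.1} := by rw [filter_true_of_mem hc]
      _ ≤ _ := by rw [filter_or]; exact card_union_le _ _
  omega

theorem card_le_sub_two_of_pairwise_not_crosses {a b : ℕ} {F : Finset (ℕ × ℕ)}
    (hF : ∀ r ∈ F, a ≤ r.1 ∧ r.1 + 2 ≤ r.2 ∧ r.2 ≤ b ∧ r ≠ (a, b))
    (hnc : ∀ r ∈ F, ∀ r' ∈ F, ¬Crosses r r') : #F ≤ b - a - 2 := by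
  rcases F.eq_empty_or_nonempty with rfl | ⟨r₀, hr₀⟩
  · simp
  have hab := hF r₀ hr₀
  have hbound : ∀ r ∈ insert (a, b) F, a ≤ r.1 ∧ r.1 + 2 ≤ r.2 ∧ r.2 ≤ b := by
    simp only [mem_insert, forall_eq_or_imp]
    exact ⟨by omega, fun r hr => by have := hF r hr; omega⟩
  have := card_le_of_pairwise_not_crosses hbound fun r hr r' hr' => by
    rw [mem_insert] at hr hr'
    rcases hr with rfl | hr <;> rcases hr' with rfl | hr'
    · unfold Crosses; omega
    · have := hF r' hr'; unfold Crosses; omega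
    · have := hF r hr; unfold Crosses; omega
    · exact hnc r hr r' hr'
  rw [card_insert_of_notMem fun h => (hF _ h).2.2.2 rfl] at this
  omega

theorem Fin.add_two_le_of_ne_add_one {n : ℕ} {s t : Fin (n + 1)} (hst : s < t)
    (hts : t ≠ s + 1) (hst' : s ≠ t + 1) : (s : ℕ) + 2 ≤ t ∧ ¬((s : ℕ) = 0 ∧ (t : ℕ) = n) := by
  rw [Fin.lt_def] at hst
  refine ⟨?_, fun ⟨hs, ht⟩ => hst' ?_⟩
  · by_contra h
    refine hts (Fin.ext ?_)
    rw [Fin.val_add_one_of_lt (hst.trans_le (Fin.le_last t))]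
    omega
  · rw [Fin.ext_iff, Fin.val_add_one, if_pos (Fin.ext ht), hs]

theorem exists_crosses_of_card_eq {m' : ℕ} {D : Finset (Fin (m' + 3) × Fin (m' + 3))}
    (hcard : #D = m')
    (hdiag : ∀ p ∈ D, (p.1 : ℕ) + 2 ≤ (p.2 : ℕ) ∧ ¬((p.1 : ℕ) = 0 ∧ (p.2 : ℕ) = m' + 2))
    (hnc : ∀ p ∈ D, ∀ q ∈ D, ¬Crosses p q) {s t : Fin (m' + 3)} (hst : s < t)
    (hts : t ≠ s + 1) (hst' : s ≠ t + 1) (hD : (s, t) ∉ D) : ∃ d ∈ D, Crosses (s, t) d := by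
  by_contra! hno
  obtain ⟨hlen, hne⟩ := Fin.add_two_le_of_ne_add_one hst hts hst'
  let f : Fin (m' + 3) × Fin (m' + 3) → ℕ × ℕ := Prod.map Fin.val Fin.val
  have hf : Function.Injective f := Prod.map_injective.2 ⟨Fin.val_injective, Fin.val_injective⟩
  have hcross (p q) : Crosses (f p) (f q) ↔ Crosses p q := Fin.val_strictMono.crosses_map_iff
  have hmem : ∀ r ∈ insert (f (s, t)) (D.image f),
      0 ≤ r.1 ∧ r.1 + 2 ≤ r.2 ∧ r.2 ≤ m' + 2 ∧ r ≠ (0, m' + 2) := by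
    simp only [mem_insert, mem_image, forall_eq_or_imp, forall_exists_index, and_imp,
      forall_apply_eq_imp_iff₂, f, Prod.map_fst, Prod.map_snd]
    refine ⟨?_, fun d hd => ?_⟩
    · have := t.isLt
      exact ⟨Nat.zero_le _, hlen, by omega, fun h => hne (Prod.ext_iff.1 h)⟩
    · have hd' := hdiag d hd
      have := d.2.isLt
      exact ⟨Nat.zero_le _, hd'.1, by omega, fun h => hd'.2 (Prod.ext_iff.1 h)⟩
  have := card_le_sub_two_of_pairwise_not_crosses hmem fun r hr r' hr' => by
    simp only [mem_insert, mem_image] at hr hr'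
    rcases hr with rfl | ⟨d, hd, rfl⟩ <;> rcases hr' with rfl | ⟨d', hd', rfl⟩ <;>
      rw [hcross]
    · simp [Crosses]
    · exact hno d' hd'
    · exact fun h => hno d hd h.symm
    · exact hnc d hd d' hd'
  rw [card_insert_of_notMem (by rwa [hf.mem_finset_image]), card_image_of_injective _ hf,
    hcard] at this
  omega

theorem br_swap {k : Type*} [CommRing k] {n : ℕ} (a b : Fin n) :
    (br a b : MvPolynomial (Fin n × Fin 2) k) = -br b a := by
  unfold br; ring

theorem br_self {k : Type*} [CommRing k] {n : ℕ} (a : Fin n) :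
    (br a a : MvPolynomial (Fin n × Fin 2) k) = 0 := by
  unfold br; ring

theorem br_mul_br {k : Type*} [CommRing k] {n : ℕ} (a b c d : Fin n) :
    (br a b * br c d : MvPolynomial (Fin n × Fin 2) k) = br a c * br b d - br a d * br b c := by
  unfold br; ring

section Triangulation

variable (k : Type*) [CommRing k] {n : ℕ} [NeZero n] (D : Finset (Fin n × Fin n))

noncomputable def triangulationAlgebra : Subalgebra k (MvPolynomial (Fin n × Fin 2) k) :=
  Algebra.adjoin k ({x | ∃ i : Fin n, x = br i (i + 1)} ∪ {x | ∃ d ∈ D, x = br d.1 d.2})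

/-- The elements of `k[E_T, D_T⁻¹]` that are polynomials: those which some monomial in the
diagonal brackets multiplies into `k[E_T]`. -/
noncomputable def triangulationLaurentAlgebra : Subalgebra k (MvPolynomial (Fin n × Fin 2) k) :=
  (triangulationAlgebra k D).saturation (Submonoid.powers (∏ d ∈ D, br d.1 d.2))
    (Submonoid.powers_le.2 (prod_mem fun d hd => Algebra.subset_adjoin (Or.inr ⟨d, hd, rfl⟩)))

variable {k D}

theorem br_add_one_mem_triangulationAlgebra (i : Fin n) :
    br i (i + 1) ∈ triangulationAlgebra k D :=
  Algebra.subset_adjoin (Or.inl ⟨i, rfl⟩)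

theorem br_mem_triangulationAlgebra {d : Fin n × Fin n} (hd : d ∈ D) :
    br d.1 d.2 ∈ triangulationAlgebra k D :=
  Algebra.subset_adjoin (Or.inr ⟨d, hd, rfl⟩)

theorem mem_triangulationLaurentAlgebra_of_mul_br_mem {x : MvPolynomial (Fin n × Fin 2) k}
    {d : Fin n × Fin n} (hd : d ∈ D) (h : x * br d.1 d.2 ∈ triangulationLaurentAlgebra k D) :
    x ∈ triangulationLaurentAlgebra k D := by
  refine Subalgebra.mem_saturation_of_mul_mem_right (y := ∏ e ∈ D, br e.1 e.2) ?_
    (Submonoid.mem_powers _)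
  show x * ∏ e ∈ D, br e.1 e.2 ∈ triangulationLaurentAlgebra k D
  rw [← mul_prod_erase D _ hd, ← mul_assoc]
  exact mul_mem h (Subalgebra.le_saturation
    (prod_mem fun e he => br_mem_triangulationAlgebra (mem_of_mem_erase he)))

theorem br_mem_triangulationLaurentAlgebra_of_lt (hnc : ∀ p ∈ D, ∀ q ∈ D, ¬Crosses p q)
    (hmax : ∀ s t : Fin n, s < t → t ≠ s + 1 → s ≠ t + 1 → (s, t) ∉ D →
      ∃ d ∈ D, Crosses (s, t) d)
    {s t : Fin n} (hst : s < t) : br s t ∈ triangulationLaurentAlgebra k D := by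
  induction hc : #{e ∈ D | Crosses (s, t) e} using Nat.strong_induction_on
    generalizing s t with
  | _ c ih =>
  subst hc
  have hA : triangulationAlgebra k D ≤ triangulationLaurentAlgebra k D :=
    Subalgebra.le_saturation
  by_cases hts : t = s + 1
  · exact hA (hts ▸ br_add_one_mem_triangulationAlgebra s)
  by_cases hst' : s = t + 1
  · rw [br_swap, hst']
    exact neg_mem (hA (br_add_one_mem_triangulationAlgebra t))
  by_cases hD : (s, t) ∈ D
  · exact hA (br_mem_triangulationAlgebra (d := (s, t)) hD)
  obtain ⟨d, hd, hcross⟩ := hmax s t hst hts hst' hD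
  have side (a b : Fin n) (ha : a = s ∨ a = t) (hb : b = d.1 ∨ b = d.2) :
      br a b ∈ triangulationLaurentAlgebra k D := by
    obtain ⟨hlt, hnd, hsub⟩ := hcross.quadrilateral_side ha hb
    have hmin := ih _ (card_filter_crosses_lt hnc hd hcross hnd hsub) hlt rfl
    rcases le_total a b with hab | hab
    · rwa [min_eq_left hab, max_eq_right hab] at hmin
    · rw [min_eq_right hab, max_eq_left hab] at hmin
      rw [br_swap]
      exact neg_mem hmin
  refine mem_triangulationLaurentAlgebra_of_mul_br_mem hd ?_
  rw [br_mul_br]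
  exact sub_mem (mul_mem (side _ _ (.inl rfl) (.inl rfl)) (side _ _ (.inr rfl) (.inr rfl)))
    (mul_mem (side _ _ (.inl rfl) (.inr rfl)) (side _ _ (.inr rfl) (.inl rfl)))

theorem br_mem_triangulationLaurentAlgebra (hnc : ∀ p ∈ D, ∀ q ∈ D, ¬Crosses p q)
    (hmax : ∀ s t : Fin n, s < t → t ≠ s + 1 → s ≠ t + 1 → (s, t) ∉ D →
      ∃ d ∈ D, Crosses (s, t) d)
    (s t : Fin n) : br s t ∈ triangulationLaurentAlgebra k D := by
  rcases lt_trichotomy s t with hst | rfl | hts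
  · exact br_mem_triangulationLaurentAlgebra_of_lt hnc hmax hst
  · rw [br_self]
    exact zero_mem _
  · rw [br_swap]
    exact neg_mem (br_mem_triangulationLaurentAlgebra_of_lt hnc hmax hts)

end Triangulation

/-- Laurent phenomenon for the Grassmannian bracket algebra: let `T` be a triangulation
of the convex `m`-gon (`m = m' + 3 ≥ 3`) with vertices `0, 1, …, m-1` in cyclic order,
given by a set `D` of `m - 3` pairwise non-crossing diagonals.  Then every bracket
`[s,t]` is a Laurent polynomial in the `2m - 3` brackets of the edges of the polygon and
the diagonals of `T`, with denominator a monomial in the diagonal brackets: there are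
exponents `M` such that `[s,t] · ∏_{d ∈ D} [d]^{M d}` lies in the subalgebra generated
by the edge and diagonal brackets. -/
theorem grassmannian_laurent_phenomenon {k : Type*} [Field k] (m' : ℕ)
    (D : Finset (Fin (m' + 3) × Fin (m' + 3)))
    (hcard : D.card = m')
    (hdiag : ∀ p ∈ D, (p.1 : ℕ) + 2 ≤ (p.2 : ℕ) ∧
      ¬((p.1 : ℕ) = 0 ∧ (p.2 : ℕ) = m' + 2))
    (hnc : ∀ p ∈ D, ∀ q ∈ D,
      ¬((p.1 < q.1 ∧ q.1 < p.2 ∧ p.2 < q.2) ∨ (q.1 < p.1 ∧ p.1 < q.2 ∧ q.2 < p.2))) :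
    ∀ s t : Fin (m' + 3), ∃ M : Fin (m' + 3) × Fin (m' + 3) → ℕ,
      (br s t : MvPolynomial (Fin (m' + 3) × Fin 2) k) * ∏ d ∈ D, br d.1 d.2 ^ M d ∈
        Algebra.adjoin k
          (({x | ∃ i : Fin (m' + 3), x = br i (i + 1)} ∪
            {x | ∃ d ∈ D, x = br d.1 d.2} :
            Set (MvPolynomial (Fin (m' + 3) × Fin 2) k))) := by
  intro s t
  obtain ⟨_, ⟨N, rfl⟩, hN⟩ := br_mem_triangulationLaurentAlgebra (k := k) hnc
    (fun _ _ => exists_crosses_of_card_eq hcard hdiag hnc) s t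
  refine ⟨fun _ => N, ?_⟩
  rw [prod_pow, mul_comm, ← smul_eq_mul]
  exact hN
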